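/- arXiv:2309.08132 — 8 statements merged into one kernel-verified Lean document; each statement's English description precedes it below -/
import Mathlib

section
/- Let V be a real inner product space, W a subspace with orthogonal projection P, F an involutive linear isometry of V. Write FX = TX + ωX for X ∈ W, where TX = P(FX) ∈ W and ωX = FX − TX ∈ W⊥. If T² = (cos²θ)·I on W, then ⟨ωX, ωY⟩ = sin²θ·⟨X,Y⟩ for all X,Y ∈ W. -/
open scoped RealInnerProductSpace

/-- If `T² = cos²θ · I` on the subspace `W`, then the normal component `ω` of the
involutive linear isometry `F` satisfies `⟪ωX, ωY⟫ = sin²θ ⟪X, Y⟫`. -/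
theorem slant_omega_inner
    {V : Type*} [NormedAddCommGroup V] [InnerProductSpace ℝ V]
    (W : Submodule ℝ V) [Submodule.HasOrthogonalProjection W]
    (F : V →ₗ[ℝ] V)
    (hinv : ∀ X : V, F (F X) = X)
    (hiso : ∀ X Y : V, ⟪F X, F Y⟫ = ⟪X, Y⟫)
    (T : W → W) (hT : ∀ X : W, T X = Submodule.orthogonalProjectionOnto W (F X))
    (ω : W → V) (hω : ∀ X : W, ω X = F X - (Submodule.orthogonalProjectionOnto W (F X) : V))
    (θ : ℝ)
    (hslant : ∀ X : W, T (T X) = (Real.cos θ) ^ 2 • X) :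
    ∀ X Y : W, ⟪ω X, ω Y⟫ = (Real.sin θ) ^ 2 * ⟪(X : V), (Y : V)⟫ := by
  intro X Y
  -- ω X is orthogonal to W
  have homega : ∀ (Z : W) (w : W), ⟪ω Z, (w : V)⟫ = 0 := by
    intro Z w
    have hmem : ω Z ∈ Wᗮ := by
      rw [hω]
      exact W.sub_starProjection_mem_orthogonal (F Z)
    exact (Submodule.mem_orthogonal' W (ω Z)).mp hmem (w : V) w.2
  have hωT : ∀ Z : W, ω Z = F Z - (T Z : V) := by
    intro Z; rw [hω, hT]
  -- ⟪T X, T Y⟫ = cos²θ ⟪X, Y⟫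
  have hTT : ⟪(T X : V), (T Y : V)⟫ = (Real.cos θ) ^ 2 * ⟪(X : V), (Y : V)⟫ := by
    have h1 : ⟪(T X : V), (F Y : V)⟫ = ⟪(T X : V), (T Y : V)⟫ := by
      have := homega Y (T X)
      rw [hωT Y, inner_sub_left, real_inner_comm] at this
      linarith [this, real_inner_comm ((T Y : V)) ((T X : V))]
    have h2 : ⟪F (T X), Y⟫ = ⟪(T X : V), (F Y : V)⟫ := by
      rw [← hiso (T X) (F Y), hinv]
    have h3 : ⟪F (T X), (Y : V)⟫ = ⟪(T (T X) : V), (Y : V)⟫ := by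
      have := homega (T X) Y
      rw [hωT (T X), inner_sub_left] at this
      linarith [this]
    have h4 : ⟪(T (T X) : V), (Y : V)⟫ = (Real.cos θ) ^ 2 * ⟪(X : V), (Y : V)⟫ := by
      rw [hslant X]
      simp [real_inner_smul_left]
    rw [← h1, ← h2, h3, h4]
  -- expand
  have hexp : ⟪ω X, ω Y⟫ =
      ⟪F X, F Y⟫ - ⟪F X, (T Y : V)⟫ - ⟪(T X : V), F Y⟫ + ⟪(T X : V), (T Y : V)⟫ := by
    rw [hωT X, hωT Y, inner_sub_left, inner_sub_right, inner_sub_right]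
    ring
  have hFT : ⟪F X, (T Y : V)⟫ = ⟪(T X : V), (T Y : V)⟫ := by
    have := homega X (T Y)
    rw [hωT X, inner_sub_left] at this
    linarith [this]
  have hTF : ⟪(T X : V), F Y⟫ = ⟪(T X : V), (T Y : V)⟫ := by
    have := homega Y (T X)
    rw [hωT Y, inner_sub_left, real_inner_comm] at this
    linarith [this, real_inner_comm ((T Y : V)) ((T X : V))]
  rw [hexp, hFT, hTF, hTT, hiso]
  have h := Real.sin_sq_add_cos_sq θ
  linear_combination (-⟪(X : V), (Y : V)⟫) * h
end

section
/- Let V be a real inner product space, W a subspace, F an involutive linear isometry of V. For X ∈ W write FX = TX + ωX (tangential and normal components), and for N ∈ W⊥ write FN = BN + CN (tangential and normal components). If T² = (cos²θ)·I on W, then B(ωX) = (sin²θ)·X for all X ∈ W. -/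
open scoped RealInnerProductSpace

/-- If `T² = cos²θ · I` on `W`, then `B(ωX) = sin²θ · X` for all `X ∈ W`, where
`B` is the tangential component of `F` on the normal space and `ω` the normal
component of `F` on `W`. -/
theorem slant_B_omega
    {V : Type*} [NormedAddCommGroup V] [InnerProductSpace ℝ V]
    (W : Submodule ℝ V) [W.HasOrthogonalProjection]
    (F : V →ₗ[ℝ] V)
    (hinv : ∀ X : V, F (F X) = X)
    (hiso : ∀ X Y : V, ⟪F X, F Y⟫ = ⟪X, Y⟫)
    (T : W → W) (hT : ∀ X : W, T X = W.orthogonalProjectionOnto (F X))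
    (ω : W → V) (hω : ∀ X : W, ω X = F X - (W.orthogonalProjectionOnto (F X) : V))
    (B : V → W) (hB : ∀ N : V, B N = W.orthogonalProjectionOnto (F N))
    (θ : ℝ)
    (hslant : ∀ X : W, T (T X) = (Real.cos θ) ^ 2 • X) :
    ∀ X : W, B (ω X) = (Real.sin θ) ^ 2 • X := by
  intro X
  have key : F (ω X) = (X : V) - F ((T X : W) : V) := by
    rw [hω, map_sub, hinv, hT]
  have h1 : B (ω X) = W.orthogonalProjectionOnto (F (ω X)) := hB _
  rw [h1, key, map_sub, Submodule.orthogonalProjectionOnto_mem_subspace_eq_self]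
  have h2 : (W.orthogonalProjectionOnto (F ((T X : W) : V))) = T (T X) := (hT (T X)).symm
  rw [h2, hslant]
  have : Real.sin θ ^ 2 = 1 - Real.cos θ ^ 2 := by
    have := Real.sin_sq_add_cos_sq θ; linarith
  rw [this, sub_smul, one_smul]
end

section
/- Let V be a real inner product space, W a subspace, F an involutive linear isometry of V, with components T, ω, B, C as usual. If T² = (cos²θ)·I on W, then C(ωX) = −ω(TX) for all X ∈ W. -/
open scoped RealInnerProductSpace

/-- If `T² = cos²θ · I` on `W`, then `C(ωX) = −ω(TX)` for all `X ∈ W`, where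
`C` is the normal component of `F` on the normal space, `T` and `ω` the
tangential and normal components of `F` on `W`. -/
theorem slant_C_omega
    {V : Type*} [NormedAddCommGroup V] [InnerProductSpace ℝ V]
    (W : Submodule ℝ V) [W.HasOrthogonalProjection]
    (F : V →ₗ[ℝ] V)
    (hinv : ∀ X : V, F (F X) = X)
    (hiso : ∀ X Y : V, ⟪F X, F Y⟫ = ⟪X, Y⟫)
    (T : W → W) (hT : ∀ X : W, T X = W.orthogonalProjectionOnto (F X))
    (ω : W → V) (hω : ∀ X : W, ω X = F X - (W.orthogonalProjectionOnto (F X) : V))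
    (B : V → W) (hB : ∀ N : V, B N = W.orthogonalProjectionOnto (F N))
    (C : V → V) (hC : ∀ N : V, C N = F N - (W.orthogonalProjectionOnto (F N) : V))
    (θ : ℝ)
    (hslant : ∀ X : W, T (T X) = (Real.cos θ) ^ 2 • X) :
    ∀ X : W, C (ω X) = -(ω (T X)) := by
  intro X
  have h1 : F (ω X) = (X : V) - F (T X) := by
    rw [hω, hT, map_sub, hinv]
  have h2 : W.orthogonalProjectionOnto (F (ω X))
      = X - W.orthogonalProjectionOnto (F (T X)) := by
    rw [h1, map_sub, Submodule.orthogonalProjectionOnto_mem_subspace_eq_self]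
  rw [hC, h1, map_sub, Submodule.orthogonalProjectionOnto_mem_subspace_eq_self, hω (T X)]
  push_cast
  abel
end

section
/- Let M = M_T ×_f M_θ be a warped product pointwise bi-slant submanifold of a locally product Riemannian manifold M̄. Then for any X tangent to M_T and Z, W tangent to M_θ: g(σ(X,Z), ωW) = g(σ(X,W), ωZ). -/
/-- Lemma 4.3(i): for a warped product pointwise bi-slant submanifold
`M = M_T ×_f M_θ` of a locally product Riemannian manifold,
`g(σ(X,Z), ωW) = g(σ(X,W), ωZ)` for `X ∈ TM_T` and `Z, W ∈ TM_θ`. -/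
theorem warped_bislant_lemma_three_i
    -- `P`: points of the submanifold `M`; functions on `M` are `P → ℝ`;
    -- `V`: ambient vector fields (along `M`), a module over functions
    (P : Type) (V : Type) [AddCommGroup V] [Module (P → ℝ) V]
    -- the Riemannian metric of the ambient manifold
    (g : V →ₗ[P → ℝ] V →ₗ[P → ℝ] (P → ℝ))
    (g_symm : ∀ X Y : V, g X Y = g Y X)
    -- the almost product structure `F`: involutive isometry
    (F : V →ₗ[P → ℝ] V)
    (F_invol : ∀ X : V, F (F X) = X)
    (F_isom : ∀ X Y : V, g (F X) (F Y) = g X Y)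
    -- directional derivative `X(f)` and Levi-Civita connection `∇̄`
    (deriv : V → (P → ℝ) → (P → ℝ))
    (conn : V → V → V)
    (conn_add_left : ∀ X Y Z : V, conn (X + Y) Z = conn X Z + conn Y Z)
    (conn_add_right : ∀ X Y Z : V, conn X (Y + Z) = conn X Y + conn X Z)
    (conn_smul_left : ∀ (f : P → ℝ) (X Y : V), conn (f • X) Y = f • conn X Y)
    (conn_leibniz : ∀ (f : P → ℝ) (X Y : V),
      conn X (f • Y) = deriv X f • Y + f • conn X Y)
    (metric_compat : ∀ X Y Z : V,
      deriv X (g Y Z) = g (conn X Y) Z + g Y (conn X Z))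
    -- the structure `F` is parallel: `∇̄F = 0` (locally product Riemannian)
    (F_parallel : ∀ X Y : V, conn X (F Y) = F (conn X Y))
    -- `proj`: orthogonal projection onto the tangent bundle of `M`
    (proj : V →ₗ[P → ℝ] V)
    (proj_idem : ∀ X : V, proj (proj X) = proj X)
    (proj_selfadj : ∀ X Y : V, g (proj X) Y = g X (proj Y))
    -- tangential and normal components of `F` on `M`
    (T : V → V) (hT : ∀ X : V, T X = proj (F X))
    (ω : V → V) (hω : ∀ X : V, ω X = F X - proj (F X))
    -- second fundamental form `σ` (normal part of `∇̄`), Gauss formula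
    (σ : V → V → V) (hσ : ∀ X Y : V, σ X Y = conn X Y - proj (conn X Y))
    (σ_symm : ∀ X Y : V, proj X = X → proj Y = Y → σ X Y = σ Y X)
    -- orthogonal projections `P₁`, `P₂` onto the distributions `D₁`, `D₂`
    (P₁ P₂ : V →ₗ[P → ℝ] V)
    (P₁_idem : ∀ X : V, P₁ (P₁ X) = P₁ X) (P₂_idem : ∀ X : V, P₂ (P₂ X) = P₂ X)
    (P₁P₂ : ∀ X : V, P₁ (P₂ X) = 0) (P₂P₁ : ∀ X : V, P₂ (P₁ X) = 0)
    (P₁_selfadj : ∀ X Y : V, g (P₁ X) Y = g X (P₁ Y))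
    (P₂_selfadj : ∀ X Y : V, g (P₂ X) Y = g X (P₂ Y))
    -- the tangent bundle of `M` is `TM = D₁ ⊕ D₂`
    (hproj : proj = P₁ + P₂)
    -- `FD₁ ⊥ D₂` and `FD₂ ⊥ D₁`
    (hFD₁ : ∀ X Y : V, P₁ X = X → P₂ Y = Y → g (F X) Y = 0)
    (hFD₂ : ∀ X Y : V, P₁ X = X → P₂ Y = Y → g X (F Y) = 0)
    -- components `T₁ = P₁ ∘ T`, `T₂ = P₂ ∘ T` of the tangential part of `F`
    (T₁ T₂ : V → V)
    (hT₁ : ∀ X : V, T₁ X = P₁ (T X)) (hT₂ : ∀ X : V, T₂ X = P₂ (T X))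
    -- pointwise slant conditions with slant functions θ₁, θ₂
    (θ₁ θ₂ : P → ℝ)
    (slant₁ : ∀ X : V, P₁ X = X → T (T X) = (fun p => Real.cos (θ₁ p) ^ 2) • X)
    (slant₂ : ∀ Z : V, P₂ Z = Z → T (T Z) = (fun p => Real.cos (θ₂ p) ^ 2) • Z)
    -- warped product structure `M = M_T ×_f M_θ`: `D₁ = TM_T`, `D₂ = TM_θ`,
    -- and `∇_X Z = ∇_Z X = X(ln f) Z` for `X ∈ D₁`, `Z ∈ D₂` (O'Neill)
    (lnf : P → ℝ)
    (warp : ∀ X Z : V, P₁ X = X → P₂ Z = Z →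
      proj (conn X Z) = deriv X lnf • Z ∧ proj (conn Z X) = deriv X lnf • Z)
    :
    ∀ X Z W : V, P₁ X = X → P₂ Z = Z → P₂ W = W →
      g (σ X Z) (ω W) = g (σ X W) (ω Z) := by
  intro X Z W hX hZ hW
  have hgF : ∀ a b : V, g (F a) b = g a (F b) := by
    intro a b
    rw [← F_isom a (F b), F_invol]
  have hderiv0 : ∀ Y : V, deriv Y (0 : P → ℝ) = 0 := by
    intro Y
    have h := metric_compat Y 0 0
    simpa using h
  have hP₂X : P₂ X = 0 := by rw [← hX]; exact P₂P₁ X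
  have hprojX : proj X = X := by
    rw [hproj]; simp [LinearMap.add_apply, hX, hP₂X]
  have hprojD2 : ∀ Y : V, P₂ Y = Y → proj Y = Y := by
    intro Y hY
    have h1 : P₁ Y = 0 := by rw [← hY]; exact P₁P₂ Y
    rw [hproj]; simp [LinearMap.add_apply, hY, h1]
  have hprojσ : ∀ a b : V, proj (σ a b) = 0 := by
    intro a b; rw [hσ, map_sub, proj_idem, sub_self]
  have hgσtan : ∀ a b Y : V, proj Y = Y → g (σ a b) Y = 0 := by
    intro a b Y hY
    rw [← hY, ← proj_selfadj, hprojσ]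
    simp
  -- the key computation: a Z↔W symmetric expression for g(σ(X,Z), ωW)
  have key : ∀ Z' W' : V, P₂ Z' = Z' → P₂ W' = W' →
      g (σ X Z') (ω W') =
        - g (F X) (σ Z' W') + deriv (P₁ (F X)) lnf • g Z' W'
          - deriv X lnf • g Z' (F W') := by
    intro Z' W' hZ' hW'
    have hprojZ' : proj Z' = Z' := hprojD2 Z' hZ'
    have hprojW' : proj W' = W' := hprojD2 W' hW'
    -- Step A: g(σ X Z', ω W') = g(σ Z' X, F W')
    have stepA : g (σ X Z') (ω W') = g (σ Z' X) (F W') := by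
      rw [hω, σ_symm X Z' hprojX hprojZ', map_sub]
      have h0 : g (σ Z' X) (proj (F W')) = 0 := by
        rw [← proj_selfadj, hprojσ]; simp
      rw [h0, sub_zero]
    -- Step B: split off the tangential part via the warping formula
    have stepB : g (σ Z' X) (F W') =
        g (conn Z' X) (F W') - deriv X lnf • g Z' (F W') := by
      rw [hσ, map_sub, LinearMap.sub_apply, (warp X Z' hX hZ').2]
      simp [map_smul]
    -- Step C: metric compatibility plus parallelism of F
    have hXFW' : g X (F W') = 0 := hFD₂ X W' hX hW'
    have stepC : g (conn Z' X) (F W') = - g (F X) (conn Z' W') := by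
      have h := metric_compat Z' X (F W')
      rw [hXFW', hderiv0] at h
      have h2 : g (conn Z' X) (F W') = - g X (conn Z' (F W')) :=
        eq_neg_of_add_eq_zero_left h.symm
      rw [h2, F_parallel, ← hgF]
    -- Step D/E: decompose conn Z' W' into normal and tangential parts
    have hconn : ∀ a b : V, conn a b = σ a b + proj (conn a b) := by
      intro a b; rw [hσ]; abel
    have stepE : g (F X) (proj (conn Z' W')) = g (P₁ (F X)) (conn Z' W') := by
      rw [hproj]
      simp only [LinearMap.add_apply, map_add]
      have h0 : g (F X) (P₂ (conn Z' W')) = 0 :=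
        hFD₁ X (P₂ (conn Z' W')) hX (P₂_idem _)
      rw [h0, add_zero, ← P₁_selfadj]
    -- Step F: the D₁-component of conn Z' W' against F X via warping
    have hgX'W' : g (P₁ (F X)) W' = 0 := by
      have h1 : P₁ W' = 0 := by rw [← hW']; exact P₁P₂ W'
      rw [P₁_selfadj, h1]; simp
    have stepF : g (P₁ (F X)) (conn Z' W') = - (deriv (P₁ (F X)) lnf • g Z' W') := by
      have h := metric_compat Z' (P₁ (F X)) W'
      rw [hgX'W', hderiv0] at h
      have hc : g (conn Z' (P₁ (F X))) W' = deriv (P₁ (F X)) lnf • g Z' W' := by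
        rw [hconn Z' (P₁ (F X)), map_add, LinearMap.add_apply,
          hgσtan _ _ _ hprojW', (warp (P₁ (F X)) Z' (P₁_idem _) hZ').2]
        simp [map_smul]
      rw [hc] at h
      exact eq_neg_of_add_eq_zero_right h.symm
    calc g (σ X Z') (ω W') = g (σ Z' X) (F W') := stepA
      _ = g (conn Z' X) (F W') - deriv X lnf • g Z' (F W') := stepB
      _ = - g (F X) (conn Z' W') - deriv X lnf • g Z' (F W') := by rw [stepC]
      _ = - (g (F X) (σ Z' W') + g (P₁ (F X)) (conn Z' W'))
            - deriv X lnf • g Z' (F W') := by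
          rw [← stepE]
          conv_lhs => rw [hconn Z' W']
          rw [map_add]
      _ = - g (F X) (σ Z' W') + deriv (P₁ (F X)) lnf • g Z' W'
            - deriv X lnf • g Z' (F W') := by
          rw [stepF]; ring_nf
  rw [key Z W hZ hW, key W Z hW hZ,
    σ_symm Z W (hprojD2 Z hZ) (hprojD2 W hW), g_symm Z W]
  have hzw : g Z (F W) = g W (F Z) := by rw [← hgF, g_symm]
  rw [hzw]
end

section
/- Let M = M_T ×_f M_θ be a warped product pointwise bi-slant submanifold of a locally product Riemannian manifold M̄. Then for any X, Y tangent to M_T and Z tangent to M_θ: g(σ(X,Z), ωY) = −g(σ(X,Y), ωZ). -/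
/-- Lemma 4.3(ii): for a warped product pointwise bi-slant submanifold
`M = M_T ×_f M_θ` of a locally product Riemannian manifold,
`g(σ(X,Z), ωY) = −g(σ(X,Y), ωZ)` for `X, Y ∈ TM_T` and `Z ∈ TM_θ`. -/
theorem warped_bislant_lemma_three_ii
    -- `P`: points of the submanifold `M`; functions on `M` are `P → ℝ`;
    -- `V`: ambient vector fields (along `M`), a module over functions
    (P : Type) (V : Type) [AddCommGroup V] [Module (P → ℝ) V]
    -- the Riemannian metric of the ambient manifold
    (g : V →ₗ[P → ℝ] V →ₗ[P → ℝ] (P → ℝ))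
    (g_symm : ∀ X Y : V, g X Y = g Y X)
    -- the almost product structure `F`: involutive isometry
    (F : V →ₗ[P → ℝ] V)
    (F_invol : ∀ X : V, F (F X) = X)
    (F_isom : ∀ X Y : V, g (F X) (F Y) = g X Y)
    -- directional derivative `X(f)` and Levi-Civita connection `∇̄`
    (deriv : V → (P → ℝ) → (P → ℝ))
    (conn : V → V → V)
    (conn_add_left : ∀ X Y Z : V, conn (X + Y) Z = conn X Z + conn Y Z)
    (conn_add_right : ∀ X Y Z : V, conn X (Y + Z) = conn X Y + conn X Z)
    (conn_smul_left : ∀ (f : P → ℝ) (X Y : V), conn (f • X) Y = f • conn X Y)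
    (conn_leibniz : ∀ (f : P → ℝ) (X Y : V),
      conn X (f • Y) = deriv X f • Y + f • conn X Y)
    (metric_compat : ∀ X Y Z : V,
      deriv X (g Y Z) = g (conn X Y) Z + g Y (conn X Z))
    -- the structure `F` is parallel: `∇̄F = 0` (locally product Riemannian)
    (F_parallel : ∀ X Y : V, conn X (F Y) = F (conn X Y))
    -- `proj`: orthogonal projection onto the tangent bundle of `M`
    (proj : V →ₗ[P → ℝ] V)
    (proj_idem : ∀ X : V, proj (proj X) = proj X)
    (proj_selfadj : ∀ X Y : V, g (proj X) Y = g X (proj Y))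
    -- tangential and normal components of `F` on `M`
    (T : V → V) (hT : ∀ X : V, T X = proj (F X))
    (ω : V → V) (hω : ∀ X : V, ω X = F X - proj (F X))
    -- second fundamental form `σ` (normal part of `∇̄`), Gauss formula
    (σ : V → V → V) (hσ : ∀ X Y : V, σ X Y = conn X Y - proj (conn X Y))
    (σ_symm : ∀ X Y : V, proj X = X → proj Y = Y → σ X Y = σ Y X)
    -- orthogonal projections `P₁`, `P₂` onto the distributions `D₁`, `D₂`
    (P₁ P₂ : V →ₗ[P → ℝ] V)
    (P₁_idem : ∀ X : V, P₁ (P₁ X) = P₁ X) (P₂_idem : ∀ X : V, P₂ (P₂ X) = P₂ X)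
    (P₁P₂ : ∀ X : V, P₁ (P₂ X) = 0) (P₂P₁ : ∀ X : V, P₂ (P₁ X) = 0)
    (P₁_selfadj : ∀ X Y : V, g (P₁ X) Y = g X (P₁ Y))
    (P₂_selfadj : ∀ X Y : V, g (P₂ X) Y = g X (P₂ Y))
    -- the tangent bundle of `M` is `TM = D₁ ⊕ D₂`
    (hproj : proj = P₁ + P₂)
    -- `FD₁ ⊥ D₂` and `FD₂ ⊥ D₁`
    (hFD₁ : ∀ X Y : V, P₁ X = X → P₂ Y = Y → g (F X) Y = 0)
    (hFD₂ : ∀ X Y : V, P₁ X = X → P₂ Y = Y → g X (F Y) = 0)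
    -- components `T₁ = P₁ ∘ T`, `T₂ = P₂ ∘ T` of the tangential part of `F`
    (T₁ T₂ : V → V)
    (hT₁ : ∀ X : V, T₁ X = P₁ (T X)) (hT₂ : ∀ X : V, T₂ X = P₂ (T X))
    -- pointwise slant conditions with slant functions θ₁, θ₂
    (θ₁ θ₂ : P → ℝ)
    (slant₁ : ∀ X : V, P₁ X = X → T (T X) = (fun p => Real.cos (θ₁ p) ^ 2) • X)
    (slant₂ : ∀ Z : V, P₂ Z = Z → T (T Z) = (fun p => Real.cos (θ₂ p) ^ 2) • Z)
    -- warped product structure `M = M_T ×_f M_θ`: `D₁ = TM_T`, `D₂ = TM_θ`,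
    -- and `∇_X Z = ∇_Z X = X(ln f) Z` for `X ∈ D₁`, `Z ∈ D₂` (O'Neill)
    (lnf : P → ℝ)
    (warp : ∀ X Z : V, P₁ X = X → P₂ Z = Z →
      proj (conn X Z) = deriv X lnf • Z ∧ proj (conn Z X) = deriv X lnf • Z)
    :
    ∀ X Y Z : V, P₁ X = X → P₁ Y = Y → P₂ Z = Z →
      g (σ X Z) (ω Y) = - g (σ X Y) (ω Z) := by
  intro X Y Z hX hY hZ
  -- basic g computation lemmas
  have hgsub₁ : ∀ a b c : V, g (a - b) c = g a c - g b c := by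
    intro a b c; rw [map_sub]; rfl
  have hgsub₂ : ∀ a b c : V, g a (b - c) = g a b - g a c := by
    intro a b c; exact map_sub (g a) b c
  -- deriv X of the zero function is zero
  have hderiv0 : deriv X (0 : P → ℝ) = 0 := by
    have h := metric_compat X 0 0
    simpa using h
  -- proj Y = Y, proj Z = Z
  have hpY : proj Y = Y := by
    rw [hproj]; show P₁ Y + P₂ Y = Y
    rw [← hY, P₂P₁, add_zero, P₁_idem, hY]
  -- σ is normal
  have hprojσ : ∀ A B : V, proj (σ A B) = 0 := by
    intro A B; rw [hσ, map_sub, proj_idem, sub_self]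
  -- g(N, proj W) = 0 for N = σ A B
  have hσproj : ∀ A B W : V, g (σ A B) (proj W) = 0 := by
    intro A B W
    rw [← proj_selfadj, hprojσ, map_zero]; rfl
  -- g A (F B) = g (F A) B
  have hflip : ∀ A B : V, g A (F B) = g (F A) B := by
    intro A B
    calc g A (F B) = g (F A) (F (F B)) := (F_isom A (F B)).symm
    _ = g (F A) B := by rw [F_invol]
  -- key: g (conn X Y) W = 0 whenever P₂ W = W
  have hkey : ∀ W : V, P₂ W = W → g (conn X Y) W = 0 := by
    intro W hW
    have horth : g Y W = 0 := by
      calc g Y W = g Y (P₂ W) := by rw [hW]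
      _ = g (P₂ Y) W := (P₂_selfadj Y W).symm
      _ = g (P₂ (P₁ Y)) W := by rw [hY]
      _ = 0 := by rw [P₂P₁]; rw [map_zero]; rfl
    have h1 : g Y (conn X W) = 0 := by
      calc g Y (conn X W) = g (proj Y) (conn X W) := by rw [hpY]
      _ = g Y (proj (conn X W)) := proj_selfadj Y (conn X W)
      _ = g Y (deriv X lnf • W) := by rw [(warp X W hX hW).1]
      _ = deriv X lnf • g Y W := map_smul (g Y) _ _
      _ = 0 := by rw [horth, smul_zero]
    have h2 := metric_compat X Y W
    rw [horth, hderiv0, h1, add_zero] at h2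
    exact h2.symm
  -- g Z (F Y) = 0
  have hZFY : g Z (F Y) = 0 := by
    rw [g_symm]; exact hFD₁ Y Z hY hZ
  -- g (conn X Z) (F Y) = - g (conn X Y) (F Z)
  have hmain : g (conn X Z) (F Y) = - g (conn X Y) (F Z) := by
    have h := metric_compat X Z (F Y)
    rw [hZFY, hderiv0, F_parallel, hflip Z (conn X Y), g_symm (F Z)] at h
    exact eq_neg_of_add_eq_zero_left h.symm
  -- LHS computation
  have hLHS : g (σ X Z) (ω Y) = g (conn X Z) (F Y) := by
    rw [hω, hgsub₂, hσproj, sub_zero, hσ, hgsub₁, (warp X Z hX hZ).1]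
    have : g (deriv X lnf • Z) (F Y) = 0 := by
      rw [map_smul]
      show deriv X lnf • g Z (F Y) = 0
      rw [hZFY, smul_zero]
    rw [this, sub_zero]
  -- RHS computation
  have hP₂F : g (P₂ (conn X Y)) (F Z) = 0 := by
    rw [P₂_selfadj]
    exact hkey (P₂ (F Z)) (P₂_idem (F Z))
  have hP₁F : g (P₁ (conn X Y)) (F Z) = 0 :=
    hFD₂ (P₁ (conn X Y)) Z (P₁_idem _) hZ
  have hprojF : g (proj (conn X Y)) (F Z) = 0 := by
    rw [hproj]
    show g (P₁ (conn X Y) + P₂ (conn X Y)) (F Z) = 0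
    rw [map_add]
    show g (P₁ (conn X Y)) (F Z) + g (P₂ (conn X Y)) (F Z) = 0
    rw [hP₁F, hP₂F, add_zero]
  have hRHS : g (σ X Y) (ω Z) = g (conn X Y) (F Z) := by
    rw [hω, hgsub₂, hσproj, sub_zero, hσ, hgsub₁, hprojF, sub_zero]
  rw [hLHS, hRHS, hmain]
end

section
/- Let M = M_T ×_f M_θ be a warped product pointwise bi-slant submanifold of a locally product Riemannian manifold M̄ with distinct slant functions θ₁ and θ₂. Then for X tangent to M_T and Z, W tangent to M_θ: g(A_{ωT₁X}W + A_{ωX}T₂W, Z) + g(A_{ωT₂W}X + A_{ωW}T₁X, Z) = (sin²θ₂ − sin²θ₁)·X(ln f)·g(Z,W), where A is the shape operator. -/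
/-- Theorem 4.4: for a warped product pointwise bi-slant submanifold
`M = M_T ×_f M_θ` with distinct slant functions `θ₁, θ₂`,
`g(A_{ωT₁X}W + A_{ωX}T₂W, Z) + g(A_{ωT₂W}X + A_{ωW}T₁X, Z)
  = (sin²θ₂ − sin²θ₁)·X(ln f)·g(Z, W)`. -/
theorem warped_bislant_main_identity
    -- `P`: points of the submanifold `M`; functions on `M` are `P → ℝ`;
    -- `V`: ambient vector fields (along `M`), a module over functions
    (P : Type) (V : Type) [AddCommGroup V] [Module (P → ℝ) V]
    -- the Riemannian metric of the ambient manifold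
    (g : V →ₗ[P → ℝ] V →ₗ[P → ℝ] (P → ℝ))
    (g_symm : ∀ X Y : V, g X Y = g Y X)
    -- the almost product structure `F`: involutive isometry
    (F : V →ₗ[P → ℝ] V)
    (F_invol : ∀ X : V, F (F X) = X)
    (F_isom : ∀ X Y : V, g (F X) (F Y) = g X Y)
    -- directional derivative `X(f)` and Levi-Civita connection `∇̄`
    (deriv : V → (P → ℝ) → (P → ℝ))
    (conn : V → V → V)
    (conn_add_left : ∀ X Y Z : V, conn (X + Y) Z = conn X Z + conn Y Z)
    (conn_add_right : ∀ X Y Z : V, conn X (Y + Z) = conn X Y + conn X Z)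
    (conn_smul_left : ∀ (f : P → ℝ) (X Y : V), conn (f • X) Y = f • conn X Y)
    (conn_leibniz : ∀ (f : P → ℝ) (X Y : V),
      conn X (f • Y) = deriv X f • Y + f • conn X Y)
    (metric_compat : ∀ X Y Z : V,
      deriv X (g Y Z) = g (conn X Y) Z + g Y (conn X Z))
    -- the structure `F` is parallel: `∇̄F = 0` (locally product Riemannian)
    (F_parallel : ∀ X Y : V, conn X (F Y) = F (conn X Y))
    -- `proj`: orthogonal projection onto the tangent bundle of `M`
    (proj : V →ₗ[P → ℝ] V)
    (proj_idem : ∀ X : V, proj (proj X) = proj X)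
    (proj_selfadj : ∀ X Y : V, g (proj X) Y = g X (proj Y))
    -- tangential and normal components of `F` on `M`
    (T : V → V) (hT : ∀ X : V, T X = proj (F X))
    (ω : V → V) (hω : ∀ X : V, ω X = F X - proj (F X))
    -- second fundamental form `σ` (normal part of `∇̄`), Gauss formula
    (σ : V → V → V) (hσ : ∀ X Y : V, σ X Y = conn X Y - proj (conn X Y))
    (σ_symm : ∀ X Y : V, proj X = X → proj Y = Y → σ X Y = σ Y X)
    -- shape operator `A` (Weingarten formula `∇̄_X N = −A_N X + ∇⊥_X N`)
    (A : V → V → V) (hA : ∀ (N X : V), A N X = - proj (conn X N))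
    -- orthogonal projections `P₁`, `P₂` onto the distributions `D₁`, `D₂`
    (P₁ P₂ : V →ₗ[P → ℝ] V)
    (P₁_idem : ∀ X : V, P₁ (P₁ X) = P₁ X) (P₂_idem : ∀ X : V, P₂ (P₂ X) = P₂ X)
    (P₁P₂ : ∀ X : V, P₁ (P₂ X) = 0) (P₂P₁ : ∀ X : V, P₂ (P₁ X) = 0)
    (P₁_selfadj : ∀ X Y : V, g (P₁ X) Y = g X (P₁ Y))
    (P₂_selfadj : ∀ X Y : V, g (P₂ X) Y = g X (P₂ Y))
    -- the tangent bundle of `M` is `TM = D₁ ⊕ D₂`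
    (hproj : proj = P₁ + P₂)
    -- `FD₁ ⊥ D₂` and `FD₂ ⊥ D₁`
    (hFD₁ : ∀ X Y : V, P₁ X = X → P₂ Y = Y → g (F X) Y = 0)
    (hFD₂ : ∀ X Y : V, P₁ X = X → P₂ Y = Y → g X (F Y) = 0)
    -- components `T₁ = P₁ ∘ T`, `T₂ = P₂ ∘ T` of the tangential part of `F`
    (T₁ T₂ : V → V)
    (hT₁ : ∀ X : V, T₁ X = P₁ (T X)) (hT₂ : ∀ X : V, T₂ X = P₂ (T X))
    -- pointwise slant conditions with slant functions θ₁, θ₂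
    (θ₁ θ₂ : P → ℝ)
    (slant₁ : ∀ X : V, P₁ X = X → T (T X) = (fun p => Real.cos (θ₁ p) ^ 2) • X)
    (slant₂ : ∀ Z : V, P₂ Z = Z → T (T Z) = (fun p => Real.cos (θ₂ p) ^ 2) • Z)
    (hθ : θ₁ ≠ θ₂)
    -- warped product structure `M = M_T ×_f M_θ`: `D₁ = TM_T`, `D₂ = TM_θ`,
    -- and `∇_X Z = ∇_Z X = X(ln f) Z` for `X ∈ D₁`, `Z ∈ D₂` (O'Neill)
    (lnf : P → ℝ)
    (warp : ∀ X Z : V, P₁ X = X → P₂ Z = Z →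
      proj (conn X Z) = deriv X lnf • Z ∧ proj (conn Z X) = deriv X lnf • Z)
    :
    ∀ X Z W : V, P₁ X = X → P₂ Z = Z → P₂ W = W →
      g (A (ω (T₁ X)) W + A (ω X) (T₂ W)) Z +
        g (A (ω (T₂ W)) X + A (ω W) (T₁ X)) Z =
      (fun p => Real.sin (θ₂ p) ^ 2 - Real.sin (θ₁ p) ^ 2) * deriv X lnf * g Z W := by
  -- ## scalar/bilinearity helpers
  have g0l : ∀ u : V, g 0 u = 0 := by intro u; simp
  have g0r : ∀ u : V, g u 0 = 0 := by intro u; simp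
  have gsubl : ∀ a b c : V, g (a - b) c = g a c - g b c := by intro a b c; simp
  have gsubr : ∀ a b c : V, g a (b - c) = g a b - g a c := by intro a b c; simp
  have gaddl : ∀ a b c : V, g (a + b) c = g a c + g b c := by intro a b c; simp
  have gaddr : ∀ a b c : V, g a (b + c) = g a b + g a c := by intro a b c; simp
  have gsmull : ∀ (f : P → ℝ) (a b : V), g (f • a) b = f * g a b := by
    intro f a b; simp [smul_eq_mul]
  have gsmulr : ∀ (f : P → ℝ) (a b : V), g a (f • b) = f * g a b := by
    intro f a b; simp [smul_eq_mul]
  have gnegl : ∀ a b : V, g (-a) b = - g a b := by intro a b; simp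
  -- ## derivative of zero, metric compatibility on orthogonal pairs
  have deriv0 : ∀ u : V, deriv u (0 : P → ℝ) = 0 := by
    intro u; have h := metric_compat u 0 0; simpa using h
  have dcomp : ∀ (u a b : V), g a b = 0 → g a (conn u b) = - g (conn u a) b := by
    intro u a b h
    have h2 := metric_compat u a b
    rw [h, deriv0] at h2
    exact eq_neg_of_add_eq_zero_right h2.symm
  -- ## projection facts
  have projP₁ : ∀ u : V, proj (P₁ u) = P₁ u := by
    intro u; rw [hproj, LinearMap.add_apply, P₁_idem, P₂P₁, add_zero]
  have projP₂ : ∀ u : V, proj (P₂ u) = P₂ u := by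
    intro u; rw [hproj, LinearMap.add_apply, P₁P₂, P₂_idem, zero_add]
  have projd₁ : ∀ u : V, P₁ u = u → proj u = u := by
    intro u h; conv_lhs => rw [← h]
    rw [projP₁, h]
  have projd₂ : ∀ u : V, P₂ u = u → proj u = u := by
    intro u h; conv_lhs => rw [← h]
    rw [projP₂, h]
  have projT : ∀ u : V, proj (T u) = T u := by intro u; rw [hT, proj_idem]
  have projT₁ : ∀ u : V, proj (T₁ u) = T₁ u := by intro u; rw [hT₁, projP₁]
  have projT₂ : ∀ u : V, proj (T₂ u) = T₂ u := by intro u; rw [hT₂, projP₂]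
  have hP₁T₁ : ∀ u : V, P₁ (T₁ u) = T₁ u := by intro u; rw [hT₁, P₁_idem]
  have hP₂T₂ : ∀ u : V, P₂ (T₂ u) = T₂ u := by intro u; rw [hT₂, P₂_idem]
  -- drop proj against a tangent vector
  have gtanl : ∀ (η C : V), proj C = C → g η C = g (proj η) C := by
    intro η C h
    rw [proj_selfadj, h]
  -- ω, σ are normal
  have gωl : ∀ (Y C : V), proj C = C → g (ω Y) C = 0 := by
    intro Y C h
    rw [hω, gsubl, proj_selfadj, h, sub_self]
  have gωr : ∀ (Y C : V), proj C = C → g C (ω Y) = 0 := by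
    intro Y C h; rw [g_symm]; exact gωl Y C h
  have gσl : ∀ (a b C : V), proj C = C → g (σ a b) C = 0 := by
    intro a b C h
    rw [hσ, gsubl, proj_selfadj, h, sub_self]
  have gσr : ∀ (a b C : V), proj C = C → g C (σ a b) = 0 := by
    intro a b C h; rw [g_symm]; exact gσl a b C h
  -- Gauss decomposition of conn
  have connd : ∀ a b : V, conn a b = proj (conn a b) + σ a b := by
    intro a b; rw [hσ]; abel
  have gsplitr : ∀ (v a b : V), g v (conn a b) = g v (proj (conn a b)) + g v (σ a b) := by
    intro v a b
    conv_lhs => rw [connd a b]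
    rw [gaddr]
  -- ## F facts
  have gFl : ∀ a b : V, g (F a) b = g a (F b) := by
    intro a b
    conv_lhs => rw [← F_invol b]
    rw [F_isom]
  have Fdecomp : ∀ u : V, F u = T u + ω u := by intro u; rw [hT, hω]; abel
  have Tsplit : ∀ u : V, T u = T₁ u + T₂ u := by
    intro u
    rw [hT₁, hT₂, ← LinearMap.add_apply, ← hproj, projT]
  have FTTω : ∀ u : V, F u = T₁ u + T₂ u + ω u := by
    intro u; rw [Fdecomp, Tsplit]
  have ωFT : ∀ u : V, ω u = F u - T u := by intro u; rw [hω, hT]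
  have Tsub : ∀ a b : V, T (a - b) = T a - T b := by
    intro a b; rw [hT, hT, hT, map_sub, map_sub]
  have hconnF : ∀ a b c : V, g (conn a (F b)) c = g (conn a b) (F c) := by
    intro a b c; rw [F_parallel, gFl]
  -- ## orthogonality of the distributions, null components
  have orth12 : ∀ a b : V, g (P₁ a) (P₂ b) = 0 := by
    intro a b; rw [P₁_selfadj, P₁P₂, g0r]
  have nul₂ : ∀ X : V, P₁ X = X → ∀ u : V, g (T₂ X) u = 0 := by
    intro X hX u
    rw [hT₂, P₂_selfadj, hT, proj_selfadj, projP₂]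
    exact hFD₁ X (P₂ u) hX (P₂_idem u)
  have nul₁ : ∀ Z : V, P₂ Z = Z → ∀ u : V, g (T₁ Z) u = 0 := by
    intro Z hZ u
    rw [hT₁, P₁_selfadj, hT, proj_selfadj, projP₁, g_symm]
    exact hFD₂ (P₁ u) Z (P₁_idem u) hZ
  have nulTT₂ : ∀ X : V, P₁ X = X → ∀ u : V, g (T (T₂ X)) u = 0 := by
    intro X hX u
    rw [hT, proj_selfadj, gFl]
    exact nul₂ X hX (F (proj u))
  have nulTT₁ : ∀ Z : V, P₂ Z = Z → ∀ u : V, g (T (T₁ Z)) u = 0 := by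
    intro Z hZ u
    rw [hT, proj_selfadj, gFl]
    exact nul₁ Z hZ (F (proj u))
  have nulconnl : ∀ v : V, (∀ u : V, g v u = 0) → ∀ (U b : V), g (conn U v) b = 0 := by
    intro v hv U b
    have h0 : g b v = 0 := by rw [g_symm]; exact hv b
    calc g (conn U v) b = g b (conn U v) := g_symm _ _
      _ = - g (conn U b) v := dcomp U b v h0
      _ = - g v (conn U b) := by rw [g_symm]
      _ = 0 := by rw [hv, neg_zero]
  have nulconnr : ∀ v : V, (∀ u : V, g v u = 0) → ∀ (U a : V), g a (conn U v) = 0 := by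
    intro v hv U a
    have h0 : g a v = 0 := by rw [g_symm]; exact hv a
    rw [dcomp U a v h0, g_symm, hv, neg_zero]
  -- ## T is self-adjoint on tangent vectors
  have Tsa : ∀ u v : V, proj u = u → proj v = v → g (T u) v = g u (T v) := by
    intro u v hu hv
    calc g (T u) v = g (proj (F u)) v := by rw [hT]
      _ = g (F u) (proj v) := proj_selfadj _ _
      _ = g (F u) v := by rw [hv]
      _ = g u (F v) := gFl u v
      _ = g u (T v) + g u (ω v) := by rw [Fdecomp v, gaddr]
      _ = g u (T v) := by rw [gωr v u hu, add_zero]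
  -- `T₂` against `T₂` via the slant function θ₂
  have gTT₂ : ∀ Z W : V, P₂ Z = Z → P₂ W = W →
      g (T₂ W) (T₂ Z) = (fun p => Real.cos (θ₂ p) ^ 2) * g W Z := by
    intro Z W hZ hW
    have h1 : g (T₂ W) (T₂ Z) = g (T W) (T₂ Z) := by
      rw [hT₂ W, P₂_selfadj, hP₂T₂]
    have h2 : T₂ Z = T Z - T₁ Z := by rw [Tsplit Z]; abel
    have h3 : g (T W) (T₁ Z) = 0 := by rw [g_symm]; exact nul₁ Z hZ (T W)
    have h4 : g (T W) (T Z) = g W (T (T Z)) := Tsa W (T Z) (projd₂ W hW) (projT Z)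
    rw [h1, h2, gsubr, h3, sub_zero, h4, slant₂ Z hZ, gsmulr]
  -- ω-terms against the connection
  have key_ω : ∀ (U a c : V), proj a = a → g a (conn U (ω c)) = - g (σ U a) (ω c) := by
    intro U a c ha
    have h0 : g a (ω c) = 0 := gωr c a ha
    rw [dcomp U a (ω c) h0]
    congr 1
    conv_lhs => rw [connd U a]
    rw [gaddl, g_symm (proj (conn U a)) (ω c), gωl _ _ (proj_idem _), zero_add]
  -- ## key lemma: g(σ(X,W), ωZ) = 0 for X ∈ D₁, Z, W ∈ D₂
  have star : ∀ X Z W : V, P₁ X = X → P₂ Z = Z → P₂ W = W →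
      g (σ X W) (ω Z) = - g (σ X Z) (ω W) := by
    intro X Z W hX hZ hW
    have hprojZ : proj Z = Z := projd₂ Z hZ
    have e1 : g (σ X W) (ω Z) = g (σ X W) (F Z) := by
      rw [ωFT Z, gsubr, gσl X W (T Z) (projT Z), sub_zero]
    have e2 : g (σ X W) (F Z) = g (conn X W) (F Z) - (deriv X lnf) * g W (F Z) := by
      rw [hσ, gsubl, (warp X W hX hW).1, gsmull]
    have e3 : g (conn X W) (F Z) = g (conn X (F W)) Z := (hconnF X W Z).symm
    have e4 : conn X (F W) = conn X (T₁ W) + conn X (T₂ W) + conn X (ω W) := by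
      rw [FTTω W, conn_add_right, conn_add_right]
    have e5 : g (conn X (T₁ W)) Z = 0 := nulconnl (T₁ W) (nul₁ W hW) X Z
    have e6 : g (conn X (T₂ W)) Z = deriv X lnf * g W (T Z) := by
      rw [gtanl _ Z hprojZ, (warp X (T₂ W) hX (hP₂T₂ W)).1, gsmull]
      congr 1
      calc g (T₂ W) Z = g (T W) (P₂ Z) := by rw [hT₂, P₂_selfadj]
        _ = g (T W) Z := by rw [hZ]
        _ = g W (T Z) := Tsa W Z (projd₂ W hW) hprojZ
    have e7 : g (conn X (ω W)) Z = - g (σ X Z) (ω W) := by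
      rw [g_symm]; exact key_ω X Z W hprojZ
    have e8 : g W (F Z) = g W (T Z) := by
      rw [Fdecomp Z, gaddr, gωr Z W (projd₂ W hW), add_zero]
    rw [e1, e2, e3, e4, gaddl, gaddl, e5, e6, e7, e8]
    ring
  have star2 : ∀ X Z W : V, P₁ X = X → P₂ Z = Z → P₂ W = W →
      g (σ X W) (ω Z) = deriv (T₁ X) lnf * g W Z - g (σ W Z) (ω X)
        - deriv X lnf * g W (T Z) := by
    intro X Z W hX hZ hW
    have hprojZ : proj Z = Z := projd₂ Z hZ
    have hprojW : proj W = W := projd₂ W hW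
    have hprojX : proj X = X := projd₁ X hX
    have e0 : σ X W = σ W X := σ_symm X W hprojX hprojW
    have e1 : g (σ W X) (ω Z) = g (σ W X) (F Z) := by
      rw [ωFT Z, gsubr, gσl W X (T Z) (projT Z), sub_zero]
    have e2 : g (σ W X) (F Z) = g (conn W X) (F Z) - (deriv X lnf) * g W (F Z) := by
      rw [hσ, gsubl, (warp X W hX hW).2, gsmull]
    have e3 : g (conn W X) (F Z) = g (conn W (F X)) Z := (hconnF W X Z).symm
    have e4 : conn W (F X) = conn W (T₁ X) + conn W (T₂ X) + conn W (ω X) := by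
      rw [FTTω X, conn_add_right, conn_add_right]
    have e5 : g (conn W (T₁ X)) Z = deriv (T₁ X) lnf * g W Z := by
      rw [gtanl _ Z hprojZ, (warp (T₁ X) W (hP₁T₁ X) hW).2, gsmull]
    have e6 : g (conn W (T₂ X)) Z = 0 := nulconnl (T₂ X) (nul₂ X hX) W Z
    have e7 : g (conn W (ω X)) Z = - g (σ W Z) (ω X) := by
      rw [g_symm]; exact key_ω W Z X hprojZ
    have e8 : g W (F Z) = g W (T Z) := by
      rw [Fdecomp Z, gaddr, gωr Z W hprojW, add_zero]
    rw [e0, e1, e2, e3, e4, gaddl, gaddl, e5, e6, e7, e8]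
    ring
  have σω0 : ∀ X Z W : V, P₁ X = X → P₂ Z = Z → P₂ W = W →
      g (σ X W) (ω Z) = 0 := by
    intro X Z W hX hZ hW
    have hprojZ : proj Z = Z := projd₂ Z hZ
    have hprojW : proj W = W := projd₂ W hW
    have h1 := star X Z W hX hZ hW
    have h2 := star2 X Z W hX hZ hW
    have h3 := star2 X W Z hX hW hZ
    have hZW : g W Z = g Z W := g_symm _ _
    have hσsym : σ W Z = σ Z W := σ_symm W Z hprojW hprojZ
    have hTsym : g W (T Z) = g Z (T W) := by
      rw [g_symm, Tsa Z W hprojZ hprojW]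
    have h4 : g (σ X W) (ω Z) = g (σ X Z) (ω W) := by
      rw [h2, h3, hZW, hσsym, hTsym]
    have hh : g (σ X W) (ω Z) + g (σ X W) (ω Z) = 0 := by
      nth_rewrite 1 [h1]
      rw [h4]
      ring
    funext p
    have hp := congrFun hh p
    simp only [Pi.add_apply, Pi.zero_apply] at hp ⊢
    linarith
  -- ## main computation
  intro X Z W hX hZ hW
  have hprojX : proj X = X := projd₁ X hX
  have hprojZ : proj Z = Z := projd₂ Z hZ
  have hprojW : proj W = W := projd₂ W hW
  have hprojT₁X : proj (T₁ X) = T₁ X := projT₁ X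
  have hprojT₂W : proj (T₂ W) = T₂ W := projT₂ W
  have hωZ0 : ∀ Y : V, g (ω Y) Z = 0 := fun Y => gωl Y Z hprojZ
  have hAr : ∀ (N Y : V), g N Z = 0 → g (A N Y) Z = g N (conn Y Z) := by
    intro N Y h
    rw [hA, gnegl, proj_selfadj, hprojZ]
    exact (dcomp Y N Z h).symm
  have gWT₂Z : g W (T₂ Z) = g W (T Z) := by
    rw [hT₂, ← P₂_selfadj, hW]
  have gT₂WZ : g (T₂ W) Z = g W (T Z) := by
    rw [hT₂, P₂_selfadj, hZ]
    exact Tsa W Z hprojW hprojZ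
  have gXZ0 : g X Z = 0 := by
    conv_lhs => rw [← hX, ← hZ]
    exact orth12 X Z
  -- term I1
  have hA1 : g (F (T₁ X)) (conn W Z) = -(deriv (T₁ X) lnf * g W (T Z)) := by
    have t0 : g (F (T₁ X)) (conn W Z) = g (T₁ X) (conn W (F Z)) := by
      rw [gFl, ← F_parallel]
    have t1 : g (T₁ X) (conn W (T₁ Z)) = 0 := nulconnr (T₁ Z) (nul₁ Z hZ) W (T₁ X)
    have t2 : g (T₁ X) (conn W (T₂ Z)) = -(deriv (T₁ X) lnf * g W (T Z)) := by
      have h0 : g (T₁ X) (T₂ Z) = 0 := by rw [hT₁, hT₂]; exact orth12 _ _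
      rw [dcomp W (T₁ X) (T₂ Z) h0, gtanl _ _ (projT₂ Z),
        (warp (T₁ X) W (hP₁T₁ X) hW).2, gsmull, gWT₂Z]
    have t3 : g (T₁ X) (conn W (ω Z)) = 0 := by
      rw [key_ω W (T₁ X) Z hprojT₁X, σ_symm W (T₁ X) hprojW hprojT₁X,
        σω0 (T₁ X) Z W (hP₁T₁ X) hZ hW, neg_zero]
    rw [t0, FTTω Z, conn_add_right, conn_add_right, gaddr, gaddr, t1, t2, t3]
    ring
  have hB1 : g (T (T₁ X)) (conn W Z)
      = (fun p => Real.cos (θ₁ p) ^ 2) * -(deriv X lnf * g W Z) := by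
    have h0 : T₁ X = T X - T₂ X := by rw [Tsplit X]; abel
    have h1 : g (T (T₂ X)) (conn W Z) = 0 := nulTT₂ X hX (conn W Z)
    have h2 : g X (conn W Z) = -(deriv X lnf * g W Z) := by
      rw [dcomp W X Z gXZ0, gtanl _ _ hprojZ, (warp X W hX hW).2, gsmull]
    rw [h0, Tsub, gsubl, h1, sub_zero, slant₁ X hX, gsmull, h2]
  have hI1 : g (ω (T₁ X)) (conn W Z)
      = -(deriv (T₁ X) lnf * g W (T Z))
        - (fun p => Real.cos (θ₁ p) ^ 2) * -(deriv X lnf * g W Z) := by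
    rw [ωFT, gsubl, hA1, hB1]
  -- term I2
  have hA2 : g (F X) (conn (T₂ W) Z)
      = -(deriv X lnf * ((fun p => Real.cos (θ₂ p) ^ 2) * g W Z)) := by
    have t0 : g (F X) (conn (T₂ W) Z) = g X (conn (T₂ W) (F Z)) := by
      rw [gFl, ← F_parallel]
    have t1 : g X (conn (T₂ W) (T₁ Z)) = 0 := nulconnr (T₁ Z) (nul₁ Z hZ) (T₂ W) X
    have t2 : g X (conn (T₂ W) (T₂ Z))
        = -(deriv X lnf * ((fun p => Real.cos (θ₂ p) ^ 2) * g W Z)) := by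
      have h0 : g X (T₂ Z) = 0 := by
        conv_lhs => rw [← hX, hT₂]
        exact orth12 _ _
      rw [dcomp (T₂ W) X (T₂ Z) h0, gtanl _ _ (projT₂ Z),
        (warp X (T₂ W) hX (hP₂T₂ W)).2, gsmull, gTT₂ Z W hZ hW]
    have t3 : g X (conn (T₂ W) (ω Z)) = 0 := by
      rw [key_ω (T₂ W) X Z hprojX, σ_symm (T₂ W) X hprojT₂W hprojX,
        σω0 X Z (T₂ W) hX hZ (hP₂T₂ W), neg_zero]
    rw [t0, FTTω Z, conn_add_right, conn_add_right, gaddr, gaddr, t1, t2, t3]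
    ring
  have hB2 : g (T X) (conn (T₂ W) Z) = -(deriv (T₁ X) lnf * g W (T Z)) := by
    have h1 : g (T₂ X) (conn (T₂ W) Z) = 0 := nul₂ X hX (conn (T₂ W) Z)
    have h2 : g (T₁ X) (conn (T₂ W) Z) = -(deriv (T₁ X) lnf * g W (T Z)) := by
      have h0 : g (T₁ X) Z = 0 := by
        conv_lhs => rw [hT₁, ← hZ]
        exact orth12 _ _
      rw [dcomp (T₂ W) (T₁ X) Z h0, gtanl _ _ hprojZ,
        (warp (T₁ X) (T₂ W) (hP₁T₁ X) (hP₂T₂ W)).2, gsmull, gT₂WZ]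
    rw [Tsplit X, gaddl, h1, h2, add_zero]
  have hI2 : g (ω X) (conn (T₂ W) Z)
      = -(deriv X lnf * ((fun p => Real.cos (θ₂ p) ^ 2) * g W Z))
        - -(deriv (T₁ X) lnf * g W (T Z)) := by
    rw [ωFT, gsubl, hA2, hB2]
  -- term I3
  have hA3 : g (F (T₂ W)) (conn X Z)
      = deriv X lnf * ((fun p => Real.cos (θ₂ p) ^ 2) * g W Z) := by
    have t0 : g (F (T₂ W)) (conn X Z) = g (T₂ W) (conn X (F Z)) := by
      rw [gFl, ← F_parallel]
    have t1 : g (T₂ W) (conn X (T₁ Z)) = 0 := nulconnr (T₁ Z) (nul₁ Z hZ) X (T₂ W)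
    have t2 : g (T₂ W) (conn X (T₂ Z))
        = deriv X lnf * ((fun p => Real.cos (θ₂ p) ^ 2) * g W Z) := by
      rw [gsplitr, (warp X (T₂ Z) hX (hP₂T₂ Z)).1, gsmulr,
        gσr X (T₂ Z) (T₂ W) hprojT₂W, add_zero, gTT₂ Z W hZ hW]
    have t3 : g (T₂ W) (conn X (ω Z)) = 0 := by
      rw [key_ω X (T₂ W) Z hprojT₂W, σω0 X Z (T₂ W) hX hZ (hP₂T₂ W), neg_zero]
    rw [t0, FTTω Z, conn_add_right, conn_add_right, gaddr, gaddr, t1, t2, t3]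
    ring
  have hB3 : g (T (T₂ W)) (conn X Z)
      = (fun p => Real.cos (θ₂ p) ^ 2) * (deriv X lnf * g W Z) := by
    have h0 : T₂ W = T W - T₁ W := by rw [Tsplit W]; abel
    have h1 : g (T (T₁ W)) (conn X Z) = 0 := nulTT₁ W hW (conn X Z)
    have h2 : g W (conn X Z) = deriv X lnf * g W Z := by
      rw [gsplitr, (warp X Z hX hZ).1, gsmulr, gσr X Z W hprojW, add_zero]
    rw [h0, Tsub, gsubl, h1, sub_zero, slant₂ W hW, gsmull, h2]
  have hI3 : g (ω (T₂ W)) (conn X Z)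
      = deriv X lnf * ((fun p => Real.cos (θ₂ p) ^ 2) * g W Z)
        - (fun p => Real.cos (θ₂ p) ^ 2) * (deriv X lnf * g W Z) := by
    rw [ωFT, gsubl, hA3, hB3]
  -- term I4
  have hA4 : g (F W) (conn (T₁ X) Z) = deriv (T₁ X) lnf * g W (T Z) := by
    have t0 : g (F W) (conn (T₁ X) Z) = g W (conn (T₁ X) (F Z)) := by
      rw [gFl, ← F_parallel]
    have t1 : g W (conn (T₁ X) (T₁ Z)) = 0 := nulconnr (T₁ Z) (nul₁ Z hZ) (T₁ X) W
    have t2 : g W (conn (T₁ X) (T₂ Z)) = deriv (T₁ X) lnf * g W (T Z) := by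
      rw [gsplitr, (warp (T₁ X) (T₂ Z) (hP₁T₁ X) (hP₂T₂ Z)).1, gsmulr,
        gσr (T₁ X) (T₂ Z) W hprojW, add_zero, gWT₂Z]
    have t3 : g W (conn (T₁ X) (ω Z)) = 0 := by
      rw [key_ω (T₁ X) W Z hprojW, σω0 (T₁ X) Z W (hP₁T₁ X) hZ hW, neg_zero]
    rw [t0, FTTω Z, conn_add_right, conn_add_right, gaddr, gaddr, t1, t2, t3]
    ring
  have hB4 : g (T W) (conn (T₁ X) Z) = deriv (T₁ X) lnf * g W (T Z) := by
    rw [gsplitr, (warp (T₁ X) Z (hP₁T₁ X) hZ).1, gsmulr,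
      gσr (T₁ X) Z (T W) (projT W), add_zero, Tsa W Z hprojW hprojZ]
  have hI4 : g (ω W) (conn (T₁ X) Z) = 0 := by
    rw [ωFT, gsubl, hA4, hB4, sub_self]
  -- put everything together
  rw [gaddl, gaddl, hAr _ W (hωZ0 _), hAr _ (T₂ W) (hωZ0 _), hAr _ X (hωZ0 _),
    hAr _ (T₁ X) (hωZ0 _), hI1, hI2, hI3, hI4, g_symm Z W]
  funext p
  simp only [Pi.add_apply, Pi.mul_apply, Pi.sub_apply, Pi.neg_apply, Pi.zero_apply]
  rw [Real.cos_sq' (θ₁ p), Real.cos_sq' (θ₂ p)]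
  ring
end

section
/- Let M be a pointwise bi-slant submanifold of a locally product Riemannian manifold M̄ with pointwise slant distributions D₁, D₂ having slant functions θ₁, θ₂. Then for any X, Y ∈ D₁ and Z ∈ D₂: (sin²θ₂ − sin²θ₁)·g(∇_X Y, Z) = g(σ(X,Z), ωT₁Y) + g(σ(X,T₂Z), ωY) + g(σ(X,Y), ωT₂Z) + g(σ(X,T₁Y), ωZ). -/
/-- Lemma 3.2(i): for a pointwise bi-slant submanifold `M` of a locally product
Riemannian manifold with pointwise slant distributions `D₁, D₂` (slant functions
`θ₁, θ₂`), for `X, Y ∈ D₁` and `Z ∈ D₂`: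
`(sin²θ₂ − sin²θ₁) g(∇_X Y, Z) = g(σ(X,Z), ωT₁Y) + g(σ(X,T₂Z), ωY)
  + g(σ(X,Y), ωT₂Z) + g(σ(X,T₁Y), ωZ)`. -/
theorem pointwise_bislant_lemma
    -- `P`: points of the submanifold `M`; functions on `M` are `P → ℝ`;
    -- `V`: ambient vector fields (along `M`), a module over functions
    (P : Type) (V : Type) [AddCommGroup V] [Module (P → ℝ) V]
    -- the Riemannian metric of the ambient manifold
    (g : V →ₗ[P → ℝ] V →ₗ[P → ℝ] (P → ℝ))
    (g_symm : ∀ X Y : V, g X Y = g Y X)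
    -- the almost product structure `F`: involutive isometry
    (F : V →ₗ[P → ℝ] V)
    (F_invol : ∀ X : V, F (F X) = X)
    (F_isom : ∀ X Y : V, g (F X) (F Y) = g X Y)
    -- directional derivative `X(f)` and Levi-Civita connection `∇̄`
    (deriv : V → (P → ℝ) → (P → ℝ))
    (conn : V → V → V)
    (conn_add_left : ∀ X Y Z : V, conn (X + Y) Z = conn X Z + conn Y Z)
    (conn_add_right : ∀ X Y Z : V, conn X (Y + Z) = conn X Y + conn X Z)
    (conn_smul_left : ∀ (f : P → ℝ) (X Y : V), conn (f • X) Y = f • conn X Y)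
    (conn_leibniz : ∀ (f : P → ℝ) (X Y : V),
      conn X (f • Y) = deriv X f • Y + f • conn X Y)
    (metric_compat : ∀ X Y Z : V,
      deriv X (g Y Z) = g (conn X Y) Z + g Y (conn X Z))
    -- the structure `F` is parallel: `∇̄F = 0` (locally product Riemannian)
    (F_parallel : ∀ X Y : V, conn X (F Y) = F (conn X Y))
    -- `proj`: orthogonal projection onto the tangent bundle of `M`
    (proj : V →ₗ[P → ℝ] V)
    (proj_idem : ∀ X : V, proj (proj X) = proj X)
    (proj_selfadj : ∀ X Y : V, g (proj X) Y = g X (proj Y))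
    -- tangential and normal components of `F` on `M`
    (T : V → V) (hT : ∀ X : V, T X = proj (F X))
    (ω : V → V) (hω : ∀ X : V, ω X = F X - proj (F X))
    -- second fundamental form `σ` (normal part of `∇̄`), Gauss formula
    (σ : V → V → V) (hσ : ∀ X Y : V, σ X Y = conn X Y - proj (conn X Y))
    (σ_symm : ∀ X Y : V, proj X = X → proj Y = Y → σ X Y = σ Y X)
    -- induced Levi-Civita connection `∇` on `M` (tangential part of `∇̄`)
    (nab : V → V → V) (hnab : ∀ X Y : V, nab X Y = proj (conn X Y))
    -- orthogonal projections `P₁`, `P₂` onto the distributions `D₁`, `D₂`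
    (P₁ P₂ : V →ₗ[P → ℝ] V)
    (P₁_idem : ∀ X : V, P₁ (P₁ X) = P₁ X) (P₂_idem : ∀ X : V, P₂ (P₂ X) = P₂ X)
    (P₁P₂ : ∀ X : V, P₁ (P₂ X) = 0) (P₂P₁ : ∀ X : V, P₂ (P₁ X) = 0)
    (P₁_selfadj : ∀ X Y : V, g (P₁ X) Y = g X (P₁ Y))
    (P₂_selfadj : ∀ X Y : V, g (P₂ X) Y = g X (P₂ Y))
    -- the tangent bundle of `M` is `TM = D₁ ⊕ D₂`
    (hproj : proj = P₁ + P₂)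
    -- `FD₁ ⊥ D₂` and `FD₂ ⊥ D₁`
    (hFD₁ : ∀ X Y : V, P₁ X = X → P₂ Y = Y → g (F X) Y = 0)
    (hFD₂ : ∀ X Y : V, P₁ X = X → P₂ Y = Y → g X (F Y) = 0)
    -- components `T₁ = P₁ ∘ T`, `T₂ = P₂ ∘ T` of the tangential part of `F`
    (T₁ T₂ : V → V)
    (hT₁ : ∀ X : V, T₁ X = P₁ (T X)) (hT₂ : ∀ X : V, T₂ X = P₂ (T X))
    -- pointwise slant conditions with slant functions θ₁, θ₂
    (θ₁ θ₂ : P → ℝ)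
    (slant₁ : ∀ X : V, P₁ X = X → T (T X) = (fun p => Real.cos (θ₁ p) ^ 2) • X)
    (slant₂ : ∀ Z : V, P₂ Z = Z → T (T Z) = (fun p => Real.cos (θ₂ p) ^ 2) • Z)
    :
    ∀ X Y Z : V, P₁ X = X → P₁ Y = Y → P₂ Z = Z →
      (fun p => Real.sin (θ₂ p) ^ 2 - Real.sin (θ₁ p) ^ 2) * g (nab X Y) Z =
        g (σ X Z) (ω (T₁ Y)) + g (σ X (T₂ Z)) (ω Y) +
          g (σ X Y) (ω (T₂ Z)) + g (σ X (T₁ Y)) (ω Z) := by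

  intro X Y Z hX hY hZ
  have hprojapp : ∀ U : V, proj U = P₁ U + P₂ U := by
    intro U; rw [hproj]; rfl
  have hP₁Z : P₁ Z = 0 := by rw [← hZ, P₁P₂]
  have hP₂Y : P₂ Y = 0 := by rw [← hY, P₂P₁]
  have hpY : proj Y = Y := by rw [hprojapp, hY, hP₂Y, add_zero]
  have hpZ : proj Z = Z := by rw [hprojapp, hP₁Z, hZ, zero_add]
  have hpT : ∀ U : V, proj (T U) = T U := by
    intro U; rw [hT, proj_idem]
  -- conn X 0 = 0 and deriv X 0 = 0
  have hconn0 : conn X 0 = 0 := by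
    have h := conn_add_right X 0 0
    rw [add_zero] at h
    have h2 : conn X 0 + 0 = conn X 0 + conn X 0 := by rw [add_zero]; exact h
    exact (add_left_cancel h2).symm
  have hderiv0 : deriv X (0 : P → ℝ) = 0 := by
    have h := metric_compat X 0 0
    simpa [hconn0] using h
  have hD : ∀ A B : V, g A B = 0 → g (conn X A) B = - g A (conn X B) := by
    intro A B h
    have hm := metric_compat X A B
    rw [h, hderiv0] at hm
    exact eq_neg_of_add_eq_zero_left hm.symm
  -- F moves
  have hgF : ∀ A B : V, g A (F B) = g (F A) B := by
    intro A B
    have h := F_isom A (F B)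
    rw [F_invol] at h
    exact h.symm
  -- tangent ⊥ ω
  have hωnorm : ∀ A B : V, proj A = A → g A (ω B) = 0 := by
    intro A B hA
    have h1 : g A (proj (F B)) = g A (F B) := by rw [← proj_selfadj, hA]
    rw [hω, map_sub, h1, sub_self]
  have hprojω : ∀ B : V, proj (ω B) = 0 := by
    intro B; rw [hω, map_sub, proj_idem, sub_self]
  have hσω : ∀ A B : V, g (σ X A) (ω B) = g (conn X A) (ω B) := by
    intro A B
    have h1 : g (proj (conn X A)) (ω B) = 0 := by
      rw [proj_selfadj, hprojω, map_zero]
    rw [hσ, map_sub, LinearMap.sub_apply, h1, sub_zero]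
  -- radical facts
  have hrad_ω : ∀ N : V, (∀ U : V, g N U = 0) → ∀ W : V, g W (ω N) = 0 := by
    intro N hN W
    have h1 : g W (F N) = 0 := by rw [hgF, g_symm, hN]
    have h2 : g W (proj (F N)) = 0 := by rw [← proj_selfadj, hgF, g_symm, hN]
    rw [hω, map_sub, h1, h2, sub_self]
  have hrad_σ : ∀ N : V, (∀ U : V, g N U = 0) → ∀ W : V, g (σ X N) W = 0 := by
    intro N hN W
    have h1 : g (conn X N) W = 0 := by rw [hD N W (hN W), hN, neg_zero]
    have h2 : g (proj (conn X N)) W = 0 := by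
      rw [proj_selfadj, hD N (proj W) (hN _), hN, neg_zero]
    rw [hσ, map_sub, LinearMap.sub_apply, h1, h2, sub_self]
  have hradY : ∀ U : V, g (P₂ (F Y)) U = 0 := by
    intro U
    rw [P₂_selfadj]
    exact hFD₁ Y (P₂ U) hY (P₂_idem U)
  have hradZ : ∀ U : V, g (P₁ (F Z)) U = 0 := by
    intro U
    rw [P₁_selfadj, g_symm]
    exact hFD₂ (P₁ U) Z (P₁_idem U) hZ
  -- decompositions of T Y and T Z
  have hT₁Y : T₁ Y = P₁ (F Y) := by
    rw [hT₁, hT, hprojapp, map_add, P₁_idem, P₁P₂, add_zero]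
  have hTYd : T Y = T₁ Y + P₂ (F Y) := by rw [hT, hprojapp, hT₁Y]
  have hT₂Z : T₂ Z = P₂ (F Z) := by
    rw [hT₂, hT, hprojapp, map_add, P₂_idem, P₂P₁, zero_add]
  have hTZd : T Z = T₂ Z + P₁ (F Z) := by
    rw [hT, hprojapp, hT₂Z, add_comm]
  -- additivity of ω and σ X
  have hωadd : ∀ A B : V, ω (A + B) = ω A + ω B := by
    intro A B; rw [hω, hω, hω, map_add, map_add]; abel
  have hσadd : ∀ A B : V, σ X (A + B) = σ X A + σ X B := by
    intro A B; rw [hσ, hσ, hσ, conn_add_right, map_add]; abel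
  -- key identity
  have hkey : ∀ A B : V, proj A = A → proj B = B →
      g (conn X (T A)) B - g (conn X A) (T B)
        = g (σ X B) (ω A) + g (σ X A) (ω B) := by
    intro A B hA hB
    have hFA : F A = T A + ω A := by rw [hT, hω]; abel
    have hFB : F B = T B + ω B := by rw [hT, hω]; abel
    have e1 : g (conn X (T A + ω A)) B = g (conn X A) (T B + ω B) := by
      rw [← hFA, ← hFB, F_parallel]
      exact (hgF _ _).symm
    simp only [conn_add_right, map_add, LinearMap.add_apply] at e1
    have e2 : g (conn X (ω A)) B = - g (σ X B) (ω A) := by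
      have h0 : g (ω A) B = 0 := by rw [g_symm]; exact hωnorm B A hB
      rw [hD _ _ h0, hσω, g_symm]
    have e3 : g (conn X A) (ω B) = g (σ X A) (ω B) := (hσω A B).symm
    linear_combination e1 - e2 + e3
  have hYZ : g Y Z = 0 := by
    rw [← hY, P₁_selfadj, hP₁Z, map_zero]
  have I2 := hkey (T Y) Z (hpT Y) hpZ
  have I3 := hkey Y (T Z) hpY (hpT Z)
  rw [slant₁ Y hY, conn_leibniz] at I2
  rw [slant₂ Z hZ] at I3
  simp only [map_add, map_smul, LinearMap.add_apply, LinearMap.smul_apply,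
    smul_eq_mul, hYZ, mul_zero, zero_add] at I2
  simp only [map_smul, smul_eq_mul] at I3
  -- radical substitutions
  have r1 : g (σ X Z) (ω (T Y)) = g (σ X Z) (ω (T₁ Y)) := by
    rw [hTYd, hωadd, map_add, hrad_ω _ hradY, add_zero]
  have r4 : g (σ X (T Y)) (ω Z) = g (σ X (T₁ Y)) (ω Z) := by
    rw [hTYd, hσadd, map_add, LinearMap.add_apply, hrad_σ _ hradY, add_zero]
  have r2 : g (σ X (T Z)) (ω Y) = g (σ X (T₂ Z)) (ω Y) := by
    rw [hTZd, hσadd, map_add, LinearMap.add_apply, hrad_σ _ hradZ, add_zero]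
  have r3 : g (σ X Y) (ω (T Z)) = g (σ X Y) (ω (T₂ Z)) := by
    rw [hTZd, hωadd, map_add, hrad_ω _ hradZ, add_zero]
  have hnabYZ : g (nab X Y) Z = g (conn X Y) Z := by
    rw [hnab, proj_selfadj, hpZ]
  have hcoef : (fun p => Real.sin (θ₂ p) ^ 2 - Real.sin (θ₁ p) ^ 2)
      = (fun p => Real.cos (θ₁ p) ^ 2) - (fun p => Real.cos (θ₂ p) ^ 2) := by
    funext p
    have h1 := Real.sin_sq_add_cos_sq (θ₁ p)
    have h2 := Real.sin_sq_add_cos_sq (θ₂ p)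
    simp only [Pi.sub_apply]
    linarith
  rw [hnabYZ, hcoef, ← r1, ← r2, ← r3, ← r4]
  linear_combination I2 + I3
end

section
/- Let M be a pointwise semi-slant submanifold of a locally product Riemannian manifold M̄, with invariant distribution D₁ (slant angle 0) and proper pointwise slant distribution D₂ with slant function θ. Then for any X, Y ∈ D₁ and Z ∈ D₂: sin²θ·g(∇_X Y, Z) = g(σ(X,Y), ωTZ) + g(σ(X,FY), ωZ). -/
/-- Corollary: for a pointwise semi-slant submanifold `M` of a locally product
Riemannian manifold, with invariant distribution `D₁` and proper pointwise slant
distribution `D₂` with slant function `θ`: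
`sin²θ · g(∇_X Y, Z) = g(σ(X,Y), ωTZ) + g(σ(X,FY), ωZ)` for `X, Y ∈ D₁`, `Z ∈ D₂`. -/
theorem pointwise_semislant_corollary
    -- `P`: points of the submanifold `M`; functions on `M` are `P → ℝ`;
    -- `V`: ambient vector fields (along `M`), a module over functions
    (P : Type) (V : Type) [AddCommGroup V] [Module (P → ℝ) V]
    -- the Riemannian metric of the ambient manifold
    (g : V →ₗ[P → ℝ] V →ₗ[P → ℝ] (P → ℝ))
    (g_symm : ∀ X Y : V, g X Y = g Y X)
    -- the almost product structure `F`: involutive isometry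
    (F : V →ₗ[P → ℝ] V)
    (F_invol : ∀ X : V, F (F X) = X)
    (F_isom : ∀ X Y : V, g (F X) (F Y) = g X Y)
    -- directional derivative `X(f)` and Levi-Civita connection `∇̄`
    (deriv : V → (P → ℝ) → (P → ℝ))
    (conn : V → V → V)
    (conn_add_left : ∀ X Y Z : V, conn (X + Y) Z = conn X Z + conn Y Z)
    (conn_add_right : ∀ X Y Z : V, conn X (Y + Z) = conn X Y + conn X Z)
    (conn_smul_left : ∀ (f : P → ℝ) (X Y : V), conn (f • X) Y = f • conn X Y)
    (conn_leibniz : ∀ (f : P → ℝ) (X Y : V),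
      conn X (f • Y) = deriv X f • Y + f • conn X Y)
    (metric_compat : ∀ X Y Z : V,
      deriv X (g Y Z) = g (conn X Y) Z + g Y (conn X Z))
    -- the structure `F` is parallel: `∇̄F = 0` (locally product Riemannian)
    (F_parallel : ∀ X Y : V, conn X (F Y) = F (conn X Y))
    -- `proj`: orthogonal projection onto the tangent bundle of `M`
    (proj : V →ₗ[P → ℝ] V)
    (proj_idem : ∀ X : V, proj (proj X) = proj X)
    (proj_selfadj : ∀ X Y : V, g (proj X) Y = g X (proj Y))
    -- tangential and normal components of `F` on `M`
    (T : V → V) (hT : ∀ X : V, T X = proj (F X))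
    (ω : V → V) (hω : ∀ X : V, ω X = F X - proj (F X))
    -- second fundamental form `σ` (normal part of `∇̄`), Gauss formula
    (σ : V → V → V) (hσ : ∀ X Y : V, σ X Y = conn X Y - proj (conn X Y))
    (σ_symm : ∀ X Y : V, proj X = X → proj Y = Y → σ X Y = σ Y X)
    -- induced Levi-Civita connection `∇` on `M` (tangential part of `∇̄`)
    (nab : V → V → V) (hnab : ∀ X Y : V, nab X Y = proj (conn X Y))
    -- orthogonal projections `P₁`, `P₂` onto the distributions `D₁`, `D₂`
    (P₁ P₂ : V →ₗ[P → ℝ] V)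
    (P₁_idem : ∀ X : V, P₁ (P₁ X) = P₁ X) (P₂_idem : ∀ X : V, P₂ (P₂ X) = P₂ X)
    (P₁P₂ : ∀ X : V, P₁ (P₂ X) = 0) (P₂P₁ : ∀ X : V, P₂ (P₁ X) = 0)
    (P₁_selfadj : ∀ X Y : V, g (P₁ X) Y = g X (P₁ Y))
    (P₂_selfadj : ∀ X Y : V, g (P₂ X) Y = g X (P₂ Y))
    -- the tangent bundle of `M` is `TM = D₁ ⊕ D₂`
    (hproj : proj = P₁ + P₂)
    -- `D₁` is invariant under `F`
    (invariant₁ : ∀ X : V, P₁ X = X → F X = P₁ (F X))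
    -- `D₂` is proper pointwise slant with slant function `θ`
    (θ : P → ℝ)
    (proper : ∀ p, θ p ≠ 0 ∧ θ p ≠ Real.pi / 2)
    (slant₂ : ∀ Z : V, P₂ Z = Z → T (T Z) = (fun p => Real.cos (θ p) ^ 2) • Z) :
    ∀ X Y Z : V, P₁ X = X → P₁ Y = Y → P₂ Z = Z →
      (fun p => Real.sin (θ p) ^ 2) * g (nab X Y) Z =
        g (σ X Y) (ω (T Z)) + g (σ X (F Y)) (ω Z) := by
  intro X Y Z hX hY hZ
  -- basic tangency facts
  have hPZ : proj Z = Z := by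
    have h1 : P₁ Z = 0 := by rw [← hZ, P₁P₂]
    rw [hproj, LinearMap.add_apply, h1, zero_add, hZ]
  have σ_norm : ∀ A B : V, proj (σ A B) = 0 := by
    intro A B; rw [hσ, map_sub, proj_idem, sub_self]
  have ω_norm : ∀ A : V, proj (ω A) = 0 := by
    intro A; rw [hω, map_sub, proj_idem, sub_self]
  have gσt : ∀ A B C : V, proj C = C → g (σ A B) C = 0 := by
    intro A B C hC
    have h := proj_selfadj (σ A B) C
    rw [σ_norm] at h
    rw [← hC, ← h, map_zero, LinearMap.zero_apply]
  have gtω : ∀ A B : V, proj A = A → g A (ω B) = 0 := by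
    intro A B hA
    rw [← hA, proj_selfadj, ω_norm, map_zero]
  have gF : ∀ A B : V, g A (F B) = g (F A) B := by
    intro A B; rw [← F_isom A (F B), F_invol]
  have hTZt : proj (T Z) = T Z := by rw [hT, proj_idem]
  have hnabt : ∀ A B : V, proj (nab A B) = nab A B := by
    intro A B; rw [hnab, proj_idem]
  have hconn : ∀ A B : V, conn A B = nab A B + σ A B := by
    intro A B; rw [hσ, hnab]; abel
  have hFZ : F Z = T Z + ω Z := by rw [hT, hω]; abel
  have hωZ : ω Z = F Z - T Z := by rw [hω, hT]
  have hωTZ : ω (T Z) = F (T Z) - T (T Z) := by rw [hω (T Z), hT (T Z)]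
  -- E1
  have h1 : g (conn X (F Y)) (F Z) = g (nab X Y) Z := by
    rw [F_parallel, F_isom, hconn X Y, map_add, LinearMap.add_apply,
      gσt X Y Z hPZ, add_zero]
  have h2 : g (nab X (F Y)) (F Z) = g (nab X (F Y)) (T Z) := by
    rw [hFZ, map_add, gtω _ _ (hnabt X (F Y)), add_zero]
  have E1 : g (σ X (F Y)) (ω Z) = g (nab X Y) Z - g (nab X (F Y)) (T Z) := by
    have h3 : σ X (F Y) = conn X (F Y) - nab X (F Y) := by rw [hσ, hnab]
    rw [hωZ, map_sub (g (σ X (F Y))), gσt X (F Y) (T Z) hTZt, sub_zero, h3,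
      map_sub, LinearMap.sub_apply, h1, h2]
  -- E2
  have h4 : g (conn X Y) (F (T Z)) = g (nab X (F Y)) (T Z) := by
    rw [gF, ← F_parallel, hconn X (F Y), map_add, LinearMap.add_apply,
      gσt X (F Y) (T Z) hTZt, add_zero]
  have h5 : g (nab X Y) (F (T Z)) = g (nab X Y) (T (T Z)) := by
    conv_lhs => rw [← hnabt X Y]
    rw [proj_selfadj, ← hT (T Z)]
  have hTTZt : proj (T (T Z)) = T (T Z) := by rw [hT (T Z), proj_idem]
  have E2 : g (σ X Y) (ω (T Z)) =
      g (nab X (F Y)) (T Z) - g (nab X Y) (T (T Z)) := by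
    have h3 : σ X Y = conn X Y - nab X Y := by rw [hσ, hnab]
    rw [hωTZ, map_sub (g (σ X Y)), gσt X Y (T (T Z)) hTTZt, sub_zero, h3,
      map_sub, LinearMap.sub_apply, h4, h5]
  -- E3 : slant condition
  have E3 : g (nab X Y) (T (T Z)) =
      (fun p => Real.cos (θ p) ^ 2) • g (nab X Y) Z := by
    rw [slant₂ Z hZ, map_smul]
  rw [E1, E2, E3]
  funext p
  have hs : Real.sin (θ p) ^ 2 = 1 - Real.cos (θ p) ^ 2 := Real.sin_sq (θ p)
  simp only [Pi.mul_apply, Pi.smul_apply, Pi.sub_apply, Pi.add_apply,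
    smul_eq_mul, hs]
  ring
end
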